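/- Let all model parameters be positive with β1 = β1* (the critical value at which ℛ₀ = 1), set φ_u = η_u+σ_u+μ, φ_n = η_n+σ_n+μ+δ_n, φ_h = σ_h+μ+δ_h, and let J be the 7×7 Jacobian of the COVID-19 model at the disease-free equilibrium with rows (ordering S, E, I_u, I_n, I_h, R, V): (−μ, 0, −β1*, −ν·β1*, 0, θ, −Π·β2/μ), (0, −(γ+μ), β1*, ν·β1*, 0, 0, Π·β2/μ), (0, (1−p)·γ, −φ_u, 0, 0, 0, 0), (0, p·γ, 0, −φ_n, 0, 0, 0), (0, 0, η_u, η_n, −φ_h, 0, 0), (0, 0, σ_u, σ_n, σ_h, −(θ+μ), 0), (0, 0, α_u, α_n, 0, 0, −μ_c). Fix v2 > 0, w2 > 0 and define v = (0, v2, v3, v4, 0, 0, v7) with v3 = (β1* + β2·α_u·Π/(μ·μ_c))·v2/φ_u, v4 = (ν·β1* + β2·α_n·Π/(μ·μ_c))·v2/φ_n, v7 = (β2·Π/(μ·μ_c))·v2, and w = (w1, w2, w3, w4, w5, w6, w7) with w3 = ((1−p)·γ/φ_u)·w2, w4 = (p·γ/φ_n)·w2, w5 = ((1−p)·γ·η_u/φ_u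 + p·γ·η_n/φ_n)·w2/φ_h, w6 = [((1−p)·γ/φ_u)·(σ_u + σ_h·η_u/φ_h) + (p·γ/φ_n)·(σ_n + σ_h·η_n/φ_h)]·w2/(θ+μ), w7 = ((1−p)·γ·α_u/φ_u + p·γ·α_n/φ_n)·w2/μ_c, w1 = (1/μ)·[(θ/(θ+μ))·{((1−p)·γ/φ_u)·(σ_u + σ_h·η_u/φ_h) + (p·γ/φ_n)·(σ_n + σ_h·η_n/φ_h)} − (γ+μ)]·w2. Then v is a left null vector and w is a right null vector of J: vᵀ·J = 0 and J·w = 0. -/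

import Mathlib

/-!
Every component of `vᵀ J` and of `J w` except the `E`-column of the first and the `E`-row of the
second vanishes by the very definition of the corresponding coordinate of `v` or `w` (the `S`-row
after adding the `E`-row to it). Those two remaining components are `v₂` resp. `w₂` times the
same expression, which vanishes exactly because `β₁*` is the transmission rate with `ℛ₀ = 1`.
-/

open Matrix

variable {K : Type*} [Field K]

def dfeJacobian (mu th nu b1 b2 Pi ga p phiu phin phih eu en su sn sh au an mc : K) :
    Matrix (Fin 7) (Fin 7) K :=
  !![-mu, 0, -b1, -nu * b1, 0, th, -Pi * b2 / mu;
     0, -(ga + mu), b1, nu * b1, 0, 0, Pi * b2 / mu;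
     0, (1 - p) * ga, -phiu, 0, 0, 0, 0;
     0, p * ga, 0, -phin, 0, 0, 0;
     0, 0, eu, en, -phih, 0, 0;
     0, 0, su, sn, sh, -(th + mu), 0;
     0, 0, au, an, 0, 0, -mc]

-- `ℛ₀ = 1`, multiplied by `γ + μ`.
theorem balance_of_eq_criticalRate {mu mc ga p nu b1 b2 Pi au an phiu phin : K}
    (hmu : mu ≠ 0) (hmc : mc ≠ 0) (hga : ga ≠ 0) (hphiu : phiu ≠ 0) (hphin : phin ≠ 0)
    (hden : (1 - p) * phin + nu * p * phiu ≠ 0)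
    (hb1 : b1 = (mc * (ga + mu) * phiu * phin
        - ga * b2 * (Pi / mu) * ((1 - p) * au * phin + p * an * phiu))
      / (mc * ga * ((1 - p) * phin + nu * p * phiu))) :
    (1 - p) * ga * ((b1 + b2 * au * Pi / (mu * mc)) / phiu)
      + p * ga * ((nu * b1 + b2 * an * Pi / (mu * mc)) / phin) = ga + mu := by
  rw [eq_div_iff (mul_ne_zero (mul_ne_zero hmc hga) hden)] at hb1
  field_simp at hb1 ⊢
  linear_combination hb1

section

variable {mu th nu b1 b2 Pi ga p phiu phin phih eu en su sn sh au an mc : K}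

theorem vecMul_dfeJacobian_eq_zero {v2 v3 v4 v7 : K}
    (hE : (1 - p) * ga * v3 + p * ga * v4 = (ga + mu) * v2)
    (hIu : b1 * v2 + au * v7 = phiu * v3)
    (hIn : nu * b1 * v2 + an * v7 = phin * v4)
    (hV : Pi * b2 / mu * v2 = mc * v7) :
    vecMul ![0, v2, v3, v4, 0, 0, v7]
      (dfeJacobian mu th nu b1 b2 Pi ga p phiu phin phih eu en su sn sh au an mc) = 0 := by
  ext i
  fin_cases i <;>
    simp only [dfeJacobian, vecMul, dotProduct, Fin.sum_univ_seven, of_apply, Fin.zero_eta,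
      Fin.mk_one, Fin.reduceFinMk, cons_val, cons_val_zero, cons_val_one, _root_.Pi.zero_apply]
  · ring
  · linear_combination hE
  · linear_combination hIu
  · linear_combination hIn
  · ring
  · ring
  · linear_combination hV

theorem mulVec_dfeJacobian_eq_zero {w1 w2 w3 w4 w5 w6 w7 : K}
    (hS : mu * w1 + (ga + mu) * w2 = th * w6)
    (hE : b1 * w3 + nu * b1 * w4 + Pi * b2 / mu * w7 = (ga + mu) * w2)
    (hIu : (1 - p) * ga * w2 = phiu * w3)
    (hIn : p * ga * w2 = phin * w4)
    (hIh : eu * w3 + en * w4 = phih * w5)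
    (hR : su * w3 + sn * w4 + sh * w5 = (th + mu) * w6)
    (hV : au * w3 + an * w4 = mc * w7) :
    mulVec (dfeJacobian mu th nu b1 b2 Pi ga p phiu phin phih eu en su sn sh au an mc)
      ![w1, w2, w3, w4, w5, w6, w7] = 0 := by
  ext i
  fin_cases i <;>
    simp only [dfeJacobian, mulVec, dotProduct, Fin.sum_univ_seven, of_apply, Fin.zero_eta,
      Fin.mk_one, Fin.reduceFinMk, cons_val, cons_val_zero, cons_val_one, _root_.Pi.zero_apply]
  · linear_combination -hS - hE
  · linear_combination hE
  · linear_combination hIu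
  · linear_combination hIn
  · linear_combination hIh
  · linear_combination hR
  · linear_combination hV
end

theorem covid_null_eigenvectors_general
    (Pi b2 nu th mu ga p eu en su sn sh dn dh au an mc : ℝ)
    (hnu : 0 < nu)
    (hth : 0 < th) (hmu : 0 < mu) (hga : 0 < ga) (hp : 0 < p) (hp1 : p < 1)
    (heu : 0 < eu) (hen : 0 < en) (hsu : 0 < su) (hsn : 0 < sn) (hsh : 0 < sh)
    (hdn : 0 < dn) (hdh : 0 < dh) (hmc : 0 < mc)
    (phiu phin phih : ℝ)
    (hphiu : phiu = eu + su + mu) (hphin : phin = en + sn + mu + dn)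
    (hphih : phih = sh + mu + dh)
    (b1star : ℝ)
    (hb1star : b1star = (mc * (ga + mu) * phiu * phin
        - ga * b2 * (Pi / mu) * ((1 - p) * au * phin + p * an * phiu))
      / (mc * ga * ((1 - p) * phin + nu * p * phiu)))
    (J : Matrix (Fin 7) (Fin 7) ℝ)
    (hJ : J = !![-mu, 0, -b1star, -nu * b1star, 0, th, -Pi * b2 / mu;
                 0, -(ga + mu), b1star, nu * b1star, 0, 0, Pi * b2 / mu;
                 0, (1 - p) * ga, -phiu, 0, 0, 0, 0;
                 0, p * ga, 0, -phin, 0, 0, 0;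
                 0, 0, eu, en, -phih, 0, 0;
                 0, 0, su, sn, sh, -(th + mu), 0;
                 0, 0, au, an, 0, 0, -mc])
    (v2 w2 : ℝ)
    (v3 v4 v7 w1 w3 w4 w5 w6 w7 : ℝ)
    (hv3 : v3 = (b1star + b2 * au * Pi / (mu * mc)) * v2 / phiu)
    (hv4 : v4 = (nu * b1star + b2 * an * Pi / (mu * mc)) * v2 / phin)
    (hv7 : v7 = (b2 * Pi / (mu * mc)) * v2)
    (hw3 : w3 = ((1 - p) * ga / phiu) * w2)
    (hw4 : w4 = (p * ga / phin) * w2)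
    (hw5 : w5 = ((1 - p) * ga * eu / phiu + p * ga * en / phin) * w2 / phih)
    (hw6 : w6 = (((1 - p) * ga / phiu) * (su + sh * eu / phih)
      + (p * ga / phin) * (sn + sh * en / phih)) * w2 / (th + mu))
    (hw7 : w7 = ((1 - p) * ga * au / phiu + p * ga * an / phin) * w2 / mc)
    (hw1 : w1 = (1 / mu) * ((th / (th + mu)) *
      (((1 - p) * ga / phiu) * (su + sh * eu / phih)
        + (p * ga / phin) * (sn + sh * en / phih)) - (ga + mu)) * w2)
    (v w : Fin 7 → ℝ)
    (hv : v = ![0, v2, v3, v4, 0, 0, v7])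
    (hw : w = ![w1, w2, w3, w4, w5, w6, w7]) :
    Matrix.vecMul v J = 0 ∧ Matrix.mulVec J w = 0 := by
  have hphiu_pos : 0 < phiu := by rw [hphiu]; positivity
  have hphin_pos : 0 < phin := by rw [hphin]; positivity
  have hphih_ne : phih ≠ 0 := by rw [hphih]; positivity
  have hden : (1 - p) * phin + nu * p * phiu ≠ 0 := by
    have : 0 < 1 - p := sub_pos.mpr hp1
    positivity
  have hbal := balance_of_eq_criticalRate hmu.ne' hmc.ne' hga.ne' hphiu_pos.ne' hphin_pos.ne'
    hden hb1star
  have hthmu : th + mu ≠ 0 := by positivity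
  subst hJ hv hw hv3 hv4 hv7 hw1 hw3 hw4 hw5 hw6 hw7
  refine ⟨vecMul_dfeJacobian_eq_zero (by linear_combination v2 * hbal) ?_ ?_ ?_,
    mulVec_dfeJacobian_eq_zero ?_ (by linear_combination w2 * hbal) ?_ ?_ ?_ ?_ ?_⟩
  all_goals field_simp
  all_goals ring

/-- at the critical transmission rate `β1 = β1*` (where
`ℛ₀ = 1`), the vectors `v` and `w` of the center-manifold analysis are left
and right null vectors of the Jacobian `J` at the disease-free equilibrium:
`vᵀ J = 0` and `J w = 0`. -/
theorem covid_null_eigenvectors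
    (Pi b2 nu th mu ga p eu en su sn sh dn dh au an mc : ℝ)
    (hPi : 0 < Pi) (hb2 : 0 < b2) (hnu : 0 < nu) (hnu1 : nu < 1)
    (hth : 0 < th) (hmu : 0 < mu) (hga : 0 < ga) (hp : 0 < p) (hp1 : p < 1)
    (heu : 0 < eu) (hen : 0 < en) (hsu : 0 < su) (hsn : 0 < sn) (hsh : 0 < sh)
    (hdn : 0 < dn) (hdh : 0 < dh) (hau : 0 < au) (han : 0 < an) (hmc : 0 < mc)
    (phiu phin phih : ℝ)
    (hphiu : phiu = eu + su + mu) (hphin : phin = en + sn + mu + dn)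
    (hphih : phih = sh + mu + dh)
    (b1star : ℝ)
    (hb1star : b1star = (mc * (ga + mu) * phiu * phin
        - ga * b2 * (Pi / mu) * ((1 - p) * au * phin + p * an * phiu))
      / (mc * ga * ((1 - p) * phin + nu * p * phiu)))
    (hb1starpos : 0 < b1star)
    (J : Matrix (Fin 7) (Fin 7) ℝ)
    (hJ : J = !![-mu, 0, -b1star, -nu * b1star, 0, th, -Pi * b2 / mu;
                 0, -(ga + mu), b1star, nu * b1star, 0, 0, Pi * b2 / mu;
                 0, (1 - p) * ga, -phiu, 0, 0, 0, 0;
                 0, p * ga, 0, -phin, 0, 0, 0;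
                 0, 0, eu, en, -phih, 0, 0;
                 0, 0, su, sn, sh, -(th + mu), 0;
                 0, 0, au, an, 0, 0, -mc])
    (v2 w2 : ℝ) (hv2 : 0 < v2) (hw2 : 0 < w2)
    (v3 v4 v7 w1 w3 w4 w5 w6 w7 : ℝ)
    (hv3 : v3 = (b1star + b2 * au * Pi / (mu * mc)) * v2 / phiu)
    (hv4 : v4 = (nu * b1star + b2 * an * Pi / (mu * mc)) * v2 / phin)
    (hv7 : v7 = (b2 * Pi / (mu * mc)) * v2)
    (hw3 : w3 = ((1 - p) * ga / phiu) * w2)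
    (hw4 : w4 = (p * ga / phin) * w2)
    (hw5 : w5 = ((1 - p) * ga * eu / phiu + p * ga * en / phin) * w2 / phih)
    (hw6 : w6 = (((1 - p) * ga / phiu) * (su + sh * eu / phih)
      + (p * ga / phin) * (sn + sh * en / phih)) * w2 / (th + mu))
    (hw7 : w7 = ((1 - p) * ga * au / phiu + p * ga * an / phin) * w2 / mc)
    (hw1 : w1 = (1 / mu) * ((th / (th + mu)) *
      (((1 - p) * ga / phiu) * (su + sh * eu / phih)
        + (p * ga / phin) * (sn + sh * en / phih)) - (ga + mu)) * w2)
    (v w : Fin 7 → ℝ)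
    (hv : v = ![0, v2, v3, v4, 0, 0, v7])
    (hw : w = ![w1, w2, w3, w4, w5, w6, w7]) :
    Matrix.vecMul v J = 0 ∧ Matrix.mulVec J w = 0 :=
  covid_null_eigenvectors_general Pi b2 nu th mu ga p eu en su sn sh dn dh au an mc hnu hth hmu hga
    hp hp1 heu hen hsu hsn hsh hdn hdh hmc phiu phin phih hphiu hphin hphih b1star hb1star J hJ v2
    w2 v3 v4 v7 w1 w3 w4 w5 w6 w7 hv3 hv4 hv7 hw3 hw4 hw5 hw6 hw7 hw1 v w hv hw
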